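/- The radius √((4 − √13)/3) cannot be improved in the derivative comparison theorem for odd analytic functions: for every r with √((4 − √13)/3) < r < 1 there exist odd analytic functions f, g on the open unit disk D such that g is subordinate to f, |g(z)| ≤ |f(z)| for all z ∈ D, and M_{g'}(r) > M_{f'}(r). (One may take f(z) = z and g(z) = g_a(z) := z(z²−a)/(1−az²) with a ∈ [0,1) close to 1.) -/

import Mathlib

open Metric

/-- The majorant series `M_F(r) = ∑ |A_n| r^n` of an analytic function
`F(z) = ∑ A_n z^n` on the unit disk, where `A_n = F⁽ⁿ⁾(0)/n!`. -/
noncomputable def majorant (F : ℂ → ℂ) (r : ℝ) : ℝ :=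
  ∑' n : ℕ, ‖iteratedDeriv n F 0 / n.factorial‖ * r ^ n

/-- `g` is subordinate to `f` on the unit disk: `g = f ∘ φ` for some analytic
self-map `φ` of the unit disk with `φ 0 = 0`. -/
def Subordinate (g f : ℂ → ℂ) : Prop :=
  ∃ φ : ℂ → ℂ, AnalyticOnNhd ℂ φ (ball 0 1) ∧ φ 0 = 0 ∧
    Set.MapsTo φ (ball 0 1) (ball 0 1) ∧ Set.EqOn g (f ∘ φ) (ball 0 1)

/-!
Compare `f = id` with the odd Blaschke product `g_a(z) = z (z² - a) / (1 - a z²)`, `0 ≤ a < 1`.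
Since `|z² - a| ≤ |1 - a z²|` on the disk, `|g_a(z)| ≤ |z|`, so `g_a` is subordinate to `id`.
Expanding `g_a'` in powers of `z²` gives, with `x = r²`,
`M_{g_a'}(r) = a + (1 - a²) x (3 - a x) / (1 - a x)²`, hence
`M_{g_a'}(r) - 1 = (1 - a) ((1 + a) x (3 - a x) - (1 - a x)²) / (1 - a x)²`.
At `a = 1` the second factor is `2x(3 - x) - (1 - x)² = -(3x² - 8x + 1)`, which is positive
exactly when `x > (4 - √13)/3`; by continuity it stays positive for `a < 1` close to `1`,
while `M_{id'}(r) = 1`.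
-/

open FormalMultilinearSeries NNReal

theorem HasSum.ite_even_mul_pow {R : Type*} [Semiring R] [TopologicalSpace R] [ContinuousAdd R]
    {b : ℕ → R} {z s : R} (h : HasSum (fun k => b k * (z ^ 2) ^ k) s) :
    HasSum (fun n => (if Even n then b (n / 2) else 0) * z ^ n) s := by
  have heven : HasSum (fun k => (if Even (2 * k) then b (2 * k / 2) else 0) * z ^ (2 * k)) s := by
    refine h.congr_fun fun k => ?_
    rw [if_pos (even_two_mul k), Nat.mul_div_cancel_left k two_pos, pow_mul]
  have hodd : HasSum (fun k => (if Even (2 * k + 1) then b ((2 * k + 1) / 2) else 0) *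
      z ^ (2 * k + 1)) 0 := by
    refine hasSum_zero.congr_fun fun k => ?_
    rw [if_neg (Nat.not_even_iff_odd.mpr (odd_two_mul_add_one k)), zero_mul]
  simpa only [add_zero] using
    HasSum.even_add_odd (f := fun n => (if Even n then b (n / 2) else 0) * z ^ n) heven hodd

theorem hasSum_two_mul_add_three_mul_geometric {𝕜 : Type*} [NormedField 𝕜] [CompleteSpace 𝕜]
    {w : 𝕜} (hw : ‖w‖ < 1) :
    HasSum (fun k : ℕ => (2 * k + 3 : 𝕜) * w ^ k) ((3 - w) / (1 - w) ^ 2) := by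
  have hw1 : 1 - w ≠ 0 := sub_ne_zero.mpr (ne_of_apply_ne norm (by simpa using hw.ne'))
  have h := ((hasSum_coe_mul_geometric_of_norm_lt_one hw).mul_left 2).add
    ((hasSum_geometric_of_norm_lt_one hw).mul_left 3)
  rw [show 2 * (w / (1 - w) ^ 2) + 3 * (1 - w)⁻¹ = (3 - w) / (1 - w) ^ 2 by field_simp; ring] at h
  exact h.congr_fun fun k => by ring

theorem iteratedDeriv_div_factorial_eq_of_hasFPowerSeriesAt {𝕜 : Type*} [NontriviallyNormedField 𝕜]
    [CompleteSpace 𝕜] [CharZero 𝕜] {F : 𝕜 → 𝕜} {c : ℕ → 𝕜} {x : 𝕜}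
    (hF : HasFPowerSeriesAt F (ofScalars 𝕜 c) x) :
    (fun n => iteratedDeriv n F x / n.factorial) = c :=
  ofScalars_series_injective 𝕜 𝕜 (hF.analyticAt.hasFPowerSeriesAt.eq_formalMultilinearSeries hF)

theorem hasFPowerSeriesOnBall_ofScalars {𝕜 : Type*} [NontriviallyNormedField 𝕜]
    {F : 𝕜 → 𝕜} {c : ℕ → 𝕜} {ρ : ℝ≥0} (hρ : 0 < ρ) (hc : Summable fun n => ‖c n‖ * ρ ^ n)
    (hF : ∀ z : 𝕜, ‖z‖ < ρ → HasSum (fun n => c n * z ^ n) (F z)) :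
    HasFPowerSeriesOnBall F (ofScalars 𝕜 c) 0 ρ where
  r_le := (ofScalars 𝕜 c).le_radius_of_summable (by simpa only [ofScalars_norm] using hc)
  r_pos := by simpa using hρ
  hasSum {y} hy := by
    rw [zero_add]
    simpa only [ofScalars_apply_eq, smul_eq_mul] using hF y (by simpa using hy)

theorem majorant_eq_of_hasFPowerSeriesAt {F : ℂ → ℂ} {c : ℕ → ℂ}
    (hF : HasFPowerSeriesAt F (ofScalars ℂ c) 0) {r s : ℝ}
    (hs : HasSum (fun n => ‖c n‖ * r ^ n) s) : majorant F r = s := by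
  rw [majorant, ← hs.tsum_eq, ← iteratedDeriv_div_factorial_eq_of_hasFPowerSeriesAt hF]

theorem majorant_const (c : ℂ) (r : ℝ) : majorant (fun _ => c) r = ‖c‖ := by
  rw [majorant, tsum_eq_single 0 fun n hn => by simp [iteratedDeriv_const, hn]]
  simp

theorem norm_sub_ofReal_le_norm_one_sub_mul {a : ℝ} (ha : |a| ≤ 1) {w : ℂ} (hw : ‖w‖ ≤ 1) :
    ‖w - a‖ ≤ ‖1 - a * w‖ := by
  have key : ‖1 - a * w‖ ^ 2 - ‖w - a‖ ^ 2 = (1 - a ^ 2) * (1 - ‖w‖ ^ 2) := by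
    simp only [Complex.sq_norm, Complex.normSq_sub, Complex.normSq_ofReal, map_mul, map_one,
      Complex.conj_ofReal, one_mul, Complex.mul_re, Complex.ofReal_re, Complex.ofReal_im,
      Complex.conj_re, Complex.conj_im]
    ring
  have h1 : 0 ≤ 1 - a ^ 2 := by nlinarith [sq_abs a, abs_nonneg a]
  have h2 : 0 ≤ 1 - ‖w‖ ^ 2 := by nlinarith [norm_nonneg w]
  exact (pow_le_pow_iff_left₀ (norm_nonneg _) (norm_nonneg _) two_ne_zero).mp
    (by nlinarith [mul_nonneg h1 h2])

noncomputable def oddBlaschke (a : ℝ) (z : ℂ) : ℂ :=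
  z * (z ^ 2 - a) / (1 - a * z ^ 2)

def oddBlaschkeDerivCoeffSq {𝕜 : Type*} [CommRing 𝕜] (a : 𝕜) : ℕ → 𝕜
  | 0 => -a
  | k + 1 => (2 * k + 3) * (1 - a ^ 2) * a ^ k

noncomputable def oddBlaschkeDerivCoeff (a : ℝ) (n : ℕ) : ℂ :=
  if Even n then oddBlaschkeDerivCoeffSq (a : ℂ) (n / 2) else 0

section OddBlaschke

variable {a : ℝ}

theorem one_sub_ofReal_mul_ne_zero (ha : |a| ≤ 1) {w : ℂ} (hw : ‖w‖ < 1) : 1 - a * w ≠ 0 := by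
  refine sub_ne_zero.mpr (ne_of_apply_ne norm (ne_of_gt ?_))
  rw [norm_one, norm_mul, Complex.norm_real, Real.norm_eq_abs]
  nlinarith [abs_nonneg a, norm_nonneg w]

theorem oddBlaschke_neg (a : ℝ) (z : ℂ) : oddBlaschke a (-z) = -oddBlaschke a z := by
  simp only [oddBlaschke, even_two, Even.neg_pow, neg_mul, neg_div]

theorem norm_oddBlaschke_le (ha : |a| ≤ 1) {z : ℂ} (hz : ‖z‖ < 1) : ‖oddBlaschke a z‖ ≤ ‖z‖ := by
  have hz2 : ‖z ^ 2‖ < 1 := by rw [norm_pow]; nlinarith [norm_nonneg z]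
  rw [oddBlaschke, norm_div, norm_mul,
    div_le_iff₀ (norm_pos_iff.mpr (one_sub_ofReal_mul_ne_zero ha hz2))]
  exact mul_le_mul_of_nonneg_left (norm_sub_ofReal_le_norm_one_sub_mul ha hz2.le) (norm_nonneg z)

theorem analyticOnNhd_oddBlaschke (ha : |a| ≤ 1) : AnalyticOnNhd ℂ (oddBlaschke a) (ball 0 1) := by
  intro z hz
  have hz2 : ‖z ^ 2‖ < 1 := by rw [norm_pow]; nlinarith [norm_nonneg z, mem_ball_zero_iff.mp hz]
  unfold oddBlaschke
  fun_prop (disch := exact one_sub_ofReal_mul_ne_zero ha hz2)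

theorem hasDerivAt_oddBlaschke {z : ℂ} (hz : 1 - a * z ^ 2 ≠ 0) :
    HasDerivAt (oddBlaschke a) ((-a + (3 - a ^ 2) * z ^ 2 - a * z ^ 4) / (1 - a * z ^ 2) ^ 2) z := by
  have hnum : HasDerivAt (fun w : ℂ => w * (w ^ 2 - a)) (3 * z ^ 2 - a) z :=
    ((hasDerivAt_id' z).mul ((hasDerivAt_pow 2 z).sub_const (a : ℂ))).congr_deriv (by ring)
  have hden : HasDerivAt (fun w : ℂ => 1 - a * w ^ 2) (-(a * (2 * z))) z :=
    (((hasDerivAt_pow 2 z).const_mul (a : ℂ)).const_sub 1).congr_deriv (by ring)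
  exact (hnum.div hden hz).congr_deriv (by field_simp; ring)

end OddBlaschke

section Coefficients

variable {𝕜 : Type*} [NormedField 𝕜] [CompleteSpace 𝕜] {a w : 𝕜}

theorem hasSum_oddBlaschkeDerivCoeffSq_succ_mul_pow (h : ‖a * w‖ < 1) :
    HasSum (fun k => oddBlaschkeDerivCoeffSq a (k + 1) * w ^ (k + 1))
      ((1 - a ^ 2) * w * ((3 - a * w) / (1 - a * w) ^ 2)) :=
  ((hasSum_two_mul_add_three_mul_geometric h).mul_left ((1 - a ^ 2) * w)).congr_fun fun k => by
    simp only [oddBlaschkeDerivCoeffSq]; ring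

theorem hasSum_oddBlaschkeDerivCoeffSq_mul_pow (h : ‖a * w‖ < 1) :
    HasSum (fun k => oddBlaschkeDerivCoeffSq a k * w ^ k)
      ((-a + (3 - a ^ 2) * w - a * w ^ 2) / (1 - a * w) ^ 2) := by
  have haw : 1 - a * w ≠ 0 := sub_ne_zero.mpr (ne_of_apply_ne norm (by simpa using h.ne'))
  convert HasSum.zero_add (f := fun k => oddBlaschkeDerivCoeffSq a k * w ^ k)
    (hasSum_oddBlaschkeDerivCoeffSq_succ_mul_pow h) using 1
  simp only [oddBlaschkeDerivCoeffSq, pow_zero, mul_one]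
  field_simp
  ring

end Coefficients

section Majorant

variable {a : ℝ}

theorem hasSum_oddBlaschkeDerivCoeff_mul_pow (ha : |a| ≤ 1) {z : ℂ} (hz : ‖z‖ < 1) :
    HasSum (fun n => oddBlaschkeDerivCoeff a n * z ^ n) (deriv (oddBlaschke a) z) := by
  have hz2 : ‖z ^ 2‖ < 1 := by rw [norm_pow]; nlinarith [norm_nonneg z]
  have haz : ‖(a : ℂ) * z ^ 2‖ < 1 := by
    rw [norm_mul, Complex.norm_real, Real.norm_eq_abs]; nlinarith [abs_nonneg a, norm_nonneg (z ^ 2)]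
  rw [(hasDerivAt_oddBlaschke (one_sub_ofReal_mul_ne_zero ha hz2)).deriv,
    show z ^ 4 = (z ^ 2) ^ 2 by ring]
  exact HasSum.ite_even_mul_pow (hasSum_oddBlaschkeDerivCoeffSq_mul_pow haz)

theorem hasSum_norm_oddBlaschkeDerivCoeff_mul_pow (ha0 : 0 ≤ a) (ha1 : a ≤ 1) {r : ℝ}
    (hr : a * r ^ 2 < 1) :
    HasSum (fun n => ‖oddBlaschkeDerivCoeff a n‖ * r ^ n)
      (a + (1 - a ^ 2) * r ^ 2 * ((3 - a * r ^ 2) / (1 - a * r ^ 2) ^ 2)) := by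
  have hnorm : ∀ k, ‖oddBlaschkeDerivCoeffSq (a : ℂ) k‖ =
      if k = 0 then a else oddBlaschkeDerivCoeffSq a k := by
    rintro (_ | k)
    · simp [oddBlaschkeDerivCoeffSq, abs_of_nonneg ha0]
    · have ha2 : 0 ≤ 1 - a ^ 2 := by nlinarith
      rw [if_neg k.succ_ne_zero, oddBlaschkeDerivCoeffSq, oddBlaschkeDerivCoeffSq]
      norm_cast
      exact Real.norm_of_nonneg (by positivity)
  have htail := hasSum_oddBlaschkeDerivCoeffSq_succ_mul_pow
    (show ‖a * r ^ 2‖ < 1 by rwa [Real.norm_of_nonneg (by positivity)])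
  have hsq : HasSum (fun k => ‖oddBlaschkeDerivCoeffSq (a : ℂ) k‖ * (r ^ 2) ^ k)
      (a + (1 - a ^ 2) * r ^ 2 * ((3 - a * r ^ 2) / (1 - a * r ^ 2) ^ 2)) := by
    convert HasSum.zero_add (f := fun k => ‖oddBlaschkeDerivCoeffSq (a : ℂ) k‖ * (r ^ 2) ^ k)
      (htail.congr_fun fun k => by rw [hnorm, if_neg k.succ_ne_zero]) using 2
    simp [hnorm]
  refine (HasSum.ite_even_mul_pow hsq).congr_fun fun n => ?_
  simp only [oddBlaschkeDerivCoeff, apply_ite norm, norm_zero]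

theorem hasFPowerSeriesAt_deriv_oddBlaschke (ha0 : 0 ≤ a) (ha1 : a < 1) :
    HasFPowerSeriesAt (deriv (oddBlaschke a)) (ofScalars ℂ (oddBlaschkeDerivCoeff a)) 0 := by
  have ha : |a| ≤ 1 := by rw [abs_of_nonneg ha0]; exact ha1.le
  refine (hasFPowerSeriesOnBall_ofScalars (ρ := 2⁻¹) (by norm_num) ?_ fun z hz =>
    hasSum_oddBlaschkeDerivCoeff_mul_pow ha (hz.trans (by norm_num))).hasFPowerSeriesAt
  exact (hasSum_norm_oddBlaschkeDerivCoeff_mul_pow ha0 ha1.le (by norm_num; linarith)).summable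

theorem majorant_deriv_oddBlaschke (ha0 : 0 ≤ a) (ha1 : a < 1) {r : ℝ} (hr0 : 0 ≤ r) (hr1 : r < 1) :
    majorant (deriv (oddBlaschke a)) r =
      a + (1 - a ^ 2) * r ^ 2 * ((3 - a * r ^ 2) / (1 - a * r ^ 2) ^ 2) :=
  majorant_eq_of_hasFPowerSeriesAt (hasFPowerSeriesAt_deriv_oddBlaschke ha0 ha1)
    (hasSum_norm_oddBlaschkeDerivCoeff_mul_pow ha0 ha1.le
      (by nlinarith [mul_le_mul_of_nonneg_right ha1.le (sq_nonneg r)]))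

end Majorant

theorem one_sub_sq_lt_of_sqrt_lt {r : ℝ} (hr : √((4 - √13) / 3) < r) (hr1 : r < 1) :
    (1 - r ^ 2) ^ 2 < 2 * r ^ 2 * (3 - r ^ 2) := by
  have hx : (4 - √13) / 3 < r ^ 2 := Real.lt_sq_of_sqrt_lt hr
  have hr0 : 0 < r := (Real.sqrt_nonneg _).trans_lt hr
  have h13 : √13 ^ 2 = 13 := Real.sq_sqrt (by norm_num)
  nlinarith [mul_pos (by linarith : 0 < 3 * r ^ 2 - 4 + √13)
    (by nlinarith [Real.sqrt_nonneg 13] : 0 < √13 - (3 * r ^ 2 - 4))]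

theorem exists_one_lt_majorant_deriv_oddBlaschke {r : ℝ} (hr0 : 0 ≤ r) (hr1 : r < 1)
    (hr : (1 - r ^ 2) ^ 2 < 2 * r ^ 2 * (3 - r ^ 2)) :
    ∃ a, 0 ≤ a ∧ a < 1 ∧ 1 < majorant (deriv (oddBlaschke a)) r := by
  set x := r ^ 2
  have hx1 : x < 1 := by nlinarith
  have hnear : ∀ᶠ a in nhds 1, (1 - a * x) ^ 2 < (1 + a) * x * (3 - a * x) ∧ 0 < a :=
    (ContinuousAt.eventually_lt (by fun_prop) (by fun_prop) (by linear_combination hr)).and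
      (eventually_gt_nhds one_pos)
  obtain ⟨a, ⟨hP, ha0⟩, ha1 : a < 1⟩ :=
    ((hnear.filter_mono nhdsWithin_le_nhds).and
      (self_mem_nhdsWithin : Set.Iio (1 : ℝ) ∈ nhdsWithin 1 (Set.Iio 1))).exists
  have hax : 1 - a * x ≠ 0 := by nlinarith
  refine ⟨a, ha0.le, ha1, ?_⟩
  rw [majorant_deriv_oddBlaschke ha0.le ha1 hr0 hr1, ← sub_pos]
  have hfactor : a + (1 - a ^ 2) * x * ((3 - a * x) / (1 - a * x) ^ 2) - 1 =
      (1 - a) * ((1 + a) * x * (3 - a * x) - (1 - a * x) ^ 2) / (1 - a * x) ^ 2 := by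
    field_simp; ring
  rw [hfactor]
  exact div_pos (mul_pos (sub_pos.mpr ha1) (sub_pos.mpr hP)) (by positivity)

/-- The radius `√((4 - √13)/3)` cannot be improved in the derivative comparison
theorem for odd analytic functions. -/
theorem majorant_deriv_odd_comparison_radius_sharp :
    ∀ r : ℝ, Real.sqrt ((4 - Real.sqrt 13) / 3) < r → r < 1 →
      ∃ f g : ℂ → ℂ, AnalyticOnNhd ℂ f (ball 0 1) ∧
        AnalyticOnNhd ℂ g (ball 0 1) ∧
        (∀ z ∈ ball (0 : ℂ) 1, f (-z) = -f z) ∧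
        (∀ z ∈ ball (0 : ℂ) 1, g (-z) = -g z) ∧
        Subordinate g f ∧
        (∀ z ∈ ball (0 : ℂ) 1, ‖g z‖ ≤ ‖f z‖) ∧
        majorant (deriv f) r < majorant (deriv g) r := by
  intro r hr hr1
  have hr0 : 0 ≤ r := (Real.sqrt_nonneg _).trans hr.le
  obtain ⟨a, ha0, ha1, hM⟩ :=
    exists_one_lt_majorant_deriv_oddBlaschke hr0 hr1 (one_sub_sq_lt_of_sqrt_lt hr hr1)
  have ha : |a| ≤ 1 := by rw [abs_of_nonneg ha0]; exact ha1.le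
  have hle : ∀ z ∈ ball (0 : ℂ) 1, ‖oddBlaschke a z‖ ≤ ‖z‖ := fun z hz =>
    norm_oddBlaschke_le ha (mem_ball_zero_iff.mp hz)
  refine ⟨fun z => z, oddBlaschke a, analyticOnNhd_id, analyticOnNhd_oddBlaschke ha,
    fun z _ => rfl, fun z _ => oddBlaschke_neg a z, ?_, hle, ?_⟩
  · refine ⟨oddBlaschke a, analyticOnNhd_oddBlaschke ha, by simp [oddBlaschke], fun z hz => ?_,
      fun z _ => rfl⟩
    exact mem_ball_zero_iff.mpr ((hle z hz).trans_lt (mem_ball_zero_iff.mp hz))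
  · rwa [deriv_id'', majorant_const, norm_one]
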